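/- If A₁ and A₂ are two distinct maximal c-inseparable sets in a graph G, then A₁ ∩ A₂ induces a clique in G and has size at most c. -/

import Mathlib

/-!
If no clique `C` with `|C| ≤ c` contains `A₁ ∩ A₂`, then every such `C` misses a common vertex `s`.
For `u ∈ A₁`, `v ∈ A₂` the walks `u → s` and `s → v` avoiding `C` concatenate, so `C` does not
separate `u` from `v`; hence `A₁ ∪ A₂` is `c`-inseparable and maximality forces `A₁ = A₂`.
Thus `A₁ ∩ A₂` lies in a small clique.
-/

variable {V : Type*}

/-- `C` separates `x` and `y` in `G`: neither endpoint is in `C` and every walk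
from `x` to `y` meets `C`. -/
def Separates (G : SimpleGraph V) (C : Set V) (x y : V) : Prop :=
  x ∉ C ∧ y ∉ C ∧ ∀ p : G.Walk x y, ∃ z ∈ C, z ∈ p.support

/-- `x` and `y` are `c`-inseparable in `G`: no clique of size at most `c` separates them. -/
def CInsep (G : SimpleGraph V) (c : ℕ) (x y : V) : Prop :=
  ∀ C : Set V, G.IsClique C → C.ncard ≤ c → ¬ Separates G C x y

/-- A set is `c`-inseparable if all its pairs of vertices are. -/
def InsepSet (G : SimpleGraph V) (c : ℕ) (A : Set V) : Prop :=
  ∀ x ∈ A, ∀ y ∈ A, CInsep G c x y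

/-- Maximal `c`-inseparable set. -/
def MaxInsepSet (G : SimpleGraph V) (c : ℕ) (A : Set V) : Prop :=
  InsepSet G c A ∧ ∀ B, A ⊆ B → InsepSet G c B → B = A

/-- `C` separates `x` and `y` within the induced subgraph `G[A]`. -/
def SeparatesWithin (G : SimpleGraph V) (A C : Set V) (x y : V) : Prop :=
  x ∈ A \ C ∧ y ∈ A \ C ∧
    ∀ p : G.Walk x y, (∀ z ∈ p.support, z ∈ A) → ∃ z ∈ C, z ∈ p.support

/-- `G[A]` is a `c`-atom: it has no clique separator of size at most `c`. -/
def AtomWithin (G : SimpleGraph V) (c : ℕ) (A : Set V) : Prop :=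
  ¬ ∃ C : Set V, C ⊆ A ∧ G.IsClique C ∧ C.ncard ≤ c ∧ ∃ x y, SeparatesWithin G A C x y

/-- `G[A]` is a maximal `c`-atom of `G`. -/
def MaxAtom (G : SimpleGraph V) (c : ℕ) (A : Set V) : Prop :=
  AtomWithin G c A ∧ ∀ B, A ⊆ B → AtomWithin G c B → B = A

section

variable {G : SimpleGraph V} {c : ℕ} {C A₁ A₂ : Set V} {x y : V}

lemma Separates.symm (h : Separates G C x y) : Separates G C y x := by
  obtain ⟨hx, hy, hwalk⟩ := h
  refine ⟨hy, hx, fun p => ?_⟩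
  obtain ⟨z, hzC, hz⟩ := hwalk p.reverse
  exact ⟨z, hzC, by simpa using hz⟩

lemma CInsep.symm (h : CInsep G c x y) : CInsep G c y x :=
  fun C hC hCc hsep => h C hC hCc hsep.symm

lemma CInsep.exists_walk_avoiding (h : CInsep G c x y) (hC : G.IsClique C)
    (hCc : C.ncard ≤ c) (hx : x ∉ C) (hy : y ∉ C) :
    ∃ p : G.Walk x y, ∀ z ∈ p.support, z ∉ C := by
  by_contra! hmeet
  exact h C hC hCc ⟨hx, hy, fun p =>
    let ⟨z, hz, hzC⟩ := hmeet p; ⟨z, hzC, hz⟩⟩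

lemma cInsep_of_forall_exists_notMem
    (H : ∀ C : Set V, G.IsClique C → C.ncard ≤ c →
      ∃ s ∉ C, CInsep G c x s ∧ CInsep G c s y) :
    CInsep G c x y := by
  rintro C hC hCc ⟨hx, hy, hwalk⟩
  obtain ⟨s, hs, hxs, hsy⟩ := H C hC hCc
  obtain ⟨p, hp⟩ := hxs.exists_walk_avoiding hC hCc hx hs
  obtain ⟨q, hq⟩ := hsy.exists_walk_avoiding hC hCc hs hy
  obtain ⟨z, hzC, hz⟩ := hwalk (p.append q)
  rcases (SimpleGraph.Walk.mem_support_append_iff p q).mp hz with hzp | hzq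
  · exact hp z hzp hzC
  · exact hq z hzq hzC

lemma InsepSet.union (h₁ : InsepSet G c A₁) (h₂ : InsepSet G c A₂)
    (H : ∀ C : Set V, G.IsClique C → C.ncard ≤ c → ∃ s ∈ A₁ ∩ A₂, s ∉ C) :
    InsepSet G c (A₁ ∪ A₂) := by
  have across : ∀ u ∈ A₁, ∀ v ∈ A₂, CInsep G c u v := fun u hu v hv =>
    cInsep_of_forall_exists_notMem fun C hC hCc =>
      let ⟨s, ⟨hs₁, hs₂⟩, hsC⟩ := H C hC hCc
      ⟨s, hsC, h₁ u hu s hs₁, h₂ s hs₂ v hv⟩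
  rintro u (hu | hu) v (hv | hv)
  · exact h₁ u hu v hv
  · exact across u hu v hv
  · exact (across v hv u hu).symm
  · exact h₂ u hu v hv

lemma MaxInsepSet.exists_isClique_superset_inter (h₁ : MaxInsepSet G c A₁)
    (h₂ : MaxInsepSet G c A₂) (hne : A₁ ≠ A₂) :
    ∃ C : Set V, G.IsClique C ∧ C.ncard ≤ c ∧ A₁ ∩ A₂ ⊆ C := by
  by_contra! H
  have hunion := h₁.1.union h₂.1 fun C hC hCc => Set.not_subset.mp (H C hC hCc)
  exact hne ((h₁.2 _ Set.subset_union_left hunion).symm.trans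
    (h₂.2 _ Set.subset_union_right hunion))

end

/-- The intersection of two distinct maximal `c`-inseparable sets is a clique of
size at most `c`. -/
theorem stmt3 [Fintype V] (G : SimpleGraph V) (c : ℕ) (A₁ A₂ : Set V)
    (h₁ : MaxInsepSet G c A₁) (h₂ : MaxInsepSet G c A₂) (hne : A₁ ≠ A₂) :
    G.IsClique (A₁ ∩ A₂) ∧ (A₁ ∩ A₂).ncard ≤ c := by
  obtain ⟨C, hC, hCc, hsub⟩ := h₁.exists_isClique_superset_inter h₂ hne
  exact ⟨hC.subset hsub, (Set.ncard_le_ncard hsub).trans hCc⟩
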